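/- arXiv:1704.00256 — 2 statements merged into one kernel-verified Lean document; each statement's English description precedes it below -/
import Mathlib

section
/- Let a, b, c, v be real constants with a > 0, b > 0, v > 0. Define, for t ≥ 0 and s > 0, C(t, s) := (1 − s·a·b^(−2v)·Γ(2v, bt)·e^(bt)) / (s·e^(bt)), A(t, s) := s·e^(bt) / (1 − s·e^(bt)·a·b^(−2v)·(Γ(2v, bt) − Γ(2v))), and G(t; C) := ∫_0^t c / (a·b^(−2v)·Γ(2v, bμ)·e^(bμ) + e^(bμ)·C) dμ. Let π : (0, ∞) → ℝ be continuously differentiable and f : [0, ∞) → ℝ be continuous, and define ω(t, s) := e^(−G(t; C(t,s)))·π(A(t, s)) + e^(−G(t; C(t,s)))·∫_0^t f(τ)·e^(G(τ; C(t,s))) dτ. Then at every point (t, s) with t > 0 and s > 0 such that a·b^(−2v)·Γ(2v, bμ)·e^(bμ) + e^(bμ)·C(t, s) > 0 for all μ ∈ [0, t] and 1 − s·e^(bt)·a·b^(−2v)·(Γ(2v, bt) − Γ(2v)) > 0, the function ω has partial derivatives ω_t and ω_s and satisfies the first-order partial differential equation ω_t(t, s) + s·(a·t^(2v−1)·s −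 b)·ω_s(t, s) = −c·s·ω(t, s) + f(t). -/
open Real MeasureTheory intervalIntegral

/-- The upper incomplete gamma function `Γ(q, p) = ∫_p^∞ x^(q−1) e^(−x) dx`;
`upperGamma q 0` is the usual gamma function `Γ(q)`. -/
noncomputable def upperGamma (q p : ℝ) : ℝ := ∫ x in Set.Ioi p, x ^ (q - 1) * Real.exp (-x)

/-- The denominator `a·b^(−2v)·Γ(2v, bμ)·e^(bμ) + e^(bμ)·C`. -/
noncomputable def Dfun (a b v C μ : ℝ) : ℝ :=
  a * b ^ (-(2 * v)) * upperGamma (2 * v) (b * μ) * Real.exp (b * μ) + Real.exp (b * μ) * C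

/-- `G(t; C) = ∫_0^t c / (a·b^(−2v)·Γ(2v, bμ)·e^(bμ) + e^(bμ)·C) dμ`. -/
noncomputable def Gfun (a b c v C t : ℝ) : ℝ :=
  ∫ μ in (0 : ℝ)..t, c / Dfun a b v C μ

/-- The characteristic constant `C(t, s) = (1 − s·a·b^(−2v)·Γ(2v, bt)·e^(bt)) / (s·e^(bt))`. -/
noncomputable def Cfun (a b v t s : ℝ) : ℝ :=
  (1 - s * a * b ^ (-(2 * v)) * upperGamma (2 * v) (b * t) * Real.exp (b * t)) /
    (s * Real.exp (b * t))

/-- The argument `A(t, s) = s·e^(bt) / (1 − s·e^(bt)·a·b^(−2v)·(Γ(2v, bt) − Γ(2v)))`. -/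
noncomputable def Afun (a b v t s : ℝ) : ℝ :=
  s * Real.exp (b * t) /
    (1 - s * Real.exp (b * t) * a * b ^ (-(2 * v)) *
      (upperGamma (2 * v) (b * t) - upperGamma (2 * v) 0))

/-- The general solution
`ω(t, s) = e^(−G(t; C(t,s)))·π(A(t, s)) + e^(−G(t; C(t,s)))·∫_0^t f(τ)·e^(G(τ; C(t,s))) dτ`. -/
noncomputable def omegaSol (a b c v : ℝ) (piT f : ℝ → ℝ) (t s : ℝ) : ℝ :=
  Real.exp (-Gfun a b c v (Cfun a b v t s) t) * piT (Afun a b v t s) +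
    Real.exp (-Gfun a b c v (Cfun a b v t s) t) *
      ∫ τ in (0 : ℝ)..t, f τ * Real.exp (Gfun a b c v (Cfun a b v t s) τ)


/-!
Write `C₀ = C(t, s)` and `Φ(C, τ) = e^(−G(τ; C)) (π(1/D(C, 0)) + ∫_0^τ f e^(G(·; C)))`, so that
`ω(t, s) = Φ(C(t, s), t)` because `A(t, s) = 1/D(C(t, s), 0)`. Since
`C(t, s) = 1/(s e^(bt)) − a b^(−2v) Γ(2v, bt)` is constant along the characteristics
`ds/dt = s (a t^(2v−1) s − b)`, the chain rule turns the left-hand side of the equation into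
`∂_τ Φ(C₀, t) = −c/D(C₀, t) · Φ + f(t)`, and `D(C₀, t) = 1/s`.
The analytic input is that `Φ` is Fréchet differentiable at `(C₀, t)`: the integrals
`∫_0^τ F(C, μ) dμ` are differentiable in `(C, τ)` when `F` and `∂_C F` are continuous on a box
`[C₁, C₂] × [0, T]` around `{C₀} × [0, t]`, and such a box with `D > 0` exists by compactness.
-/

open Set Filter Topology Function
open scoped Interval

section ParametricPrimitive

variable {F F' : ℝ → ℝ → ℝ} {x₁ x₂ y₁ y₂ y₀ : ℝ}

theorem continuousOn_parametric_primitive (hy₀ : y₀ ∈ Icc y₁ y₂)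
    (hF : ContinuousOn (uncurry F) (Icc x₁ x₂ ×ˢ Icc y₁ y₂)) :
    ContinuousOn (fun p : ℝ × ℝ => ∫ y in y₀..p.2, F p.1 y) (Icc x₁ x₂ ×ˢ Icc y₁ y₂) := by
  rcases lt_or_ge x₂ x₁ with hx | hx
  · simp [Icc_eq_empty_of_lt hx]
  have hy : y₁ ≤ y₂ := hy₀.1.trans hy₀.2
  -- clamping both variables into the box makes the integrand globally continuous
  have hclamp : Continuous (uncurry fun x y => F (projIcc x₁ x₂ hx x) (projIcc y₁ y₂ hy y)) :=
    hF.comp_continuous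
      (f := fun p : ℝ × ℝ => ((projIcc x₁ x₂ hx p.1 : ℝ), (projIcc y₁ y₂ hy p.2 : ℝ)))
      (by fun_prop) fun p => ⟨(projIcc x₁ x₂ hx p.1).2, (projIcc y₁ y₂ hy p.2).2⟩
  refine (intervalIntegral.continuous_parametric_primitive_of_continuous
    (μ := volume) (a₀ := y₀) hclamp).continuousOn.congr ?_
  rintro ⟨x, y⟩ ⟨hxI, hyI⟩
  refine intervalIntegral.integral_congr fun s hs => ?_
  simp only [projIcc_of_mem hx hxI, projIcc_of_mem hy (uIcc_subset_Icc hy₀ hyI hs)]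

theorem hasDerivAt_intervalIntegral_of_continuousOn {x y : ℝ} (hx : x ∈ Ioo x₁ x₂)
    (hy₀ : y₀ ∈ Icc y₁ y₂) (hy : y ∈ Icc y₁ y₂)
    (hF : ContinuousOn (uncurry F) (Icc x₁ x₂ ×ˢ Icc y₁ y₂))
    (hF' : ContinuousOn (uncurry F') (Icc x₁ x₂ ×ˢ Icc y₁ y₂))
    (hderiv : ∀ x ∈ Ioo x₁ x₂, ∀ y ∈ Icc y₁ y₂, HasDerivAt (F · y) (F' x y) x) :
    HasDerivAt (fun x => ∫ s in y₀..y, F x s) (∫ s in y₀..y, F' x s) x := by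
  have hsub : uIcc y₀ y ⊆ Icc y₁ y₂ := uIcc_subset_Icc hy₀ hy
  have hsub' : Ι y₀ y ⊆ Icc y₁ y₂ := uIoc_subset_uIcc.trans hsub
  obtain ⟨M, hM⟩ := (isCompact_Icc.prod isCompact_Icc).exists_bound_of_continuousOn hF'
  refine (intervalIntegral.hasDerivAt_integral_of_dominated_loc_of_deriv_le
    (bound := fun _ => M) (Ioo_mem_nhds hx.1 hx.2) ?_ ?_ ?_ ?_ intervalIntegrable_const ?_).2
  · filter_upwards [Ioo_mem_nhds hx.1 hx.2] with x' hx'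
    exact ((hF.uncurry_left x' (Ioo_subset_Icc_self hx')).mono hsub').aestronglyMeasurable
      measurableSet_uIoc
  · exact ((hF.uncurry_left x (Ioo_subset_Icc_self hx)).mono hsub).intervalIntegrable
  · exact ((hF'.uncurry_left x (Ioo_subset_Icc_self hx)).mono hsub').aestronglyMeasurable
      measurableSet_uIoc
  · exact ae_of_all _ fun s hs x' hx' => hM (x', s) ⟨Ioo_subset_Icc_self hx', hsub' hs⟩
  · exact ae_of_all _ fun s hs x' hx' => hderiv x' hx' s (hsub' hs)

theorem hasFDerivAt_intervalIntegral_upperLimit {x₀ : ℝ} {S : Set (ℝ × ℝ)}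
    (hS : S ∈ 𝓝 (x₀, y₀)) (hF : ContinuousOn (uncurry F) S) :
    HasFDerivAt (fun p : ℝ × ℝ => ∫ y in y₀..p.2, F p.1 y)
      (F x₀ y₀ • ContinuousLinearMap.snd ℝ ℝ ℝ) (x₀, y₀) := by
  rw [hasFDerivAt_iff_isLittleO, Asymptotics.isLittleO_iff]
  intro ε hε
  obtain ⟨δ, hδ, hball⟩ := Metric.eventually_nhds_iff_ball.mp
    ((show ∀ᶠ q in 𝓝 (x₀, y₀), q ∈ S from hS).and
      (Metric.continuousAt_iff'.mp (hF.continuousAt hS) ε hε))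
  filter_upwards [Metric.ball_mem_nhds _ hδ] with p hp
  have hseg : ∀ y ∈ uIcc y₀ p.2, (p.1, y) ∈ Metric.ball (x₀, y₀) δ := by
    intro y hy
    rw [Metric.mem_ball, Prod.dist_eq] at hp ⊢
    refine max_lt (le_max_left _ _ |>.trans_lt hp) ?_
    rw [Real.dist_eq] at hp ⊢
    exact (abs_sub_left_of_mem_uIcc hy).trans_lt ((le_max_right _ _).trans_lt hp)
  have hint : IntervalIntegrable (F p.1) volume y₀ p.2 :=
    (hF.comp (f := fun y => (p.1, y)) (by fun_prop)
      fun y hy => (hball _ (hseg y hy)).1).intervalIntegrable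
  have hbound : ∀ y ∈ Ι y₀ p.2, ‖F p.1 y - F x₀ y₀‖ ≤ ε := fun y hy =>
    (dist_eq_norm (F p.1 y) _ ▸ (hball _ (hseg y (uIoc_subset_uIcc hy))).2).le
  calc _ = ‖∫ y in y₀..p.2, (F p.1 y - F x₀ y₀)‖ := by
        simp [intervalIntegral.integral_sub hint intervalIntegrable_const, mul_comm]
    _ ≤ ε * |p.2 - y₀| := intervalIntegral.norm_integral_le_of_norm_le_const hbound
    _ ≤ ε * ‖p - (x₀, y₀)‖ := by
        gcongr
        exact norm_snd_le (p - (x₀, y₀))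

theorem hasFDerivAt_parametric_primitive {x y : ℝ} (hx : x ∈ Ioo x₁ x₂) (hy : y ∈ Ioo y₁ y₂)
    (hy₀ : y₀ ∈ Icc y₁ y₂)
    (hF : ContinuousOn (uncurry F) (Icc x₁ x₂ ×ˢ Icc y₁ y₂))
    (hF' : ContinuousOn (uncurry F') (Icc x₁ x₂ ×ˢ Icc y₁ y₂))
    (hderiv : ∀ x ∈ Ioo x₁ x₂, ∀ y ∈ Icc y₁ y₂, HasDerivAt (F · y) (F' x y) x) :
    HasFDerivAt (fun p : ℝ × ℝ => ∫ s in y₀..p.2, F p.1 s)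
      ((∫ s in y₀..y, F' x s) • ContinuousLinearMap.fst ℝ ℝ ℝ +
        F x y • ContinuousLinearMap.snd ℝ ℝ ℝ) (x, y) := by
  have hbox : Icc x₁ x₂ ×ˢ Icc y₁ y₂ ∈ 𝓝 (x, y) :=
    prod_mem_nhds (Icc_mem_nhds hx.1 hx.2) (Icc_mem_nhds hy.1 hy.2)
  have hfixed := (hasDerivAt_intervalIntegral_of_continuousOn hx hy₀ (Ioo_subset_Icc_self hy)
    hF hF' hderiv).comp_hasFDerivAt (f := Prod.fst) (x, y)
    (hasFDerivAt_fst (𝕜 := ℝ) (E := ℝ) (F := ℝ) (p := (x, y)))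
  refine (hfixed.add (hasFDerivAt_intervalIntegral_upperLimit hbox hF)).congr_of_eventuallyEq ?_
  filter_upwards [hbox] with p hp
  have hint : ∀ y' ∈ Icc y₁ y₂, IntervalIntegrable (F p.1) volume y y' := fun y' hy' =>
    ((hF.uncurry_left p.1 hp.1).mono
      (uIcc_subset_Icc (Ioo_subset_Icc_self hy) hy')).intervalIntegrable
  exact (intervalIntegral.integral_add_adjacent_intervals (hint y₀ hy₀).symm (hint p.2 hp.2)).symm

end ParametricPrimitive

theorem exists_Icc_prod_Icc_subset_of_isOpen {n : Set (ℝ × ℝ)} (hn : IsOpen n) {x y₁ y₂ : ℝ}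
    (hy : y₁ ≤ y₂) (h : {x} ×ˢ Icc y₁ y₂ ⊆ n) :
    ∃ r T, 0 < r ∧ y₂ < T ∧ Icc (x - r) (x + r) ×ˢ Icc y₁ T ⊆ n := by
  obtain ⟨u, w, hu, hw, hxu, hyw, hn⟩ :=
    generalized_tube_lemma isCompact_singleton isCompact_Icc hn h
  obtain ⟨r, hr, hru⟩ := Metric.isOpen_iff.mp hu x (hxu rfl)
  obtain ⟨δ, hδ, hδw⟩ := Metric.isOpen_iff.mp hw y₂ (hyw ⟨hy, le_rfl⟩)
  refine ⟨r / 2, y₂ + δ / 2, by positivity, by linarith, ?_⟩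
  rintro ⟨x', y'⟩ ⟨hx', hy'⟩
  refine hn ⟨hru ?_, ?_⟩
  · rw [Metric.mem_ball, Real.dist_eq, abs_sub_lt_iff]
    constructor <;> linarith [hx'.1, hx'.2]
  · rcases le_or_gt y' y₂ with hle | hgt
    · exact hyw ⟨hy'.1, hle⟩
    · refine hδw ?_
      rw [Metric.mem_ball, Real.dist_eq, abs_sub_lt_iff]
      constructor <;> linarith [hy'.2]

section UpperGamma

variable {q : ℝ}

theorem intervalIntegrable_rpow_mul_exp_neg (hq : 0 < q) (x y : ℝ) :
    IntervalIntegrable (fun t : ℝ => t ^ (q - 1) * Real.exp (-t)) volume x y :=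
  (intervalIntegrable_rpow' (by linarith)).mul_continuousOn (by fun_prop)

theorem upperGamma_eq_sub_integral (hq : 0 < q) (p : ℝ) :
    upperGamma q p = upperGamma q 0 - ∫ t in (0 : ℝ)..p, t ^ (q - 1) * Real.exp (-t) := by
  have hΓ : IntegrableOn (fun t : ℝ => t ^ (q - 1) * Real.exp (-t)) (Ioi 0) :=
    (Real.GammaIntegral_convergent hq).congr_fun (fun t _ => mul_comm _ _) measurableSet_Ioi
  rw [upperGamma, upperGamma, ← intervalIntegral.integral_interval_add_Ioi'
    (intervalIntegrable_rpow_mul_exp_neg hq p 0) hΓ, intervalIntegral.integral_symm p]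
  ring

theorem continuous_upperGamma (hq : 0 < q) : Continuous (upperGamma q) := by
  rw [funext (upperGamma_eq_sub_integral hq)]
  exact continuous_const.sub
    (intervalIntegral.continuous_primitive (intervalIntegrable_rpow_mul_exp_neg hq) 0)

theorem hasDerivAt_upperGamma (hq : 0 < q) {p : ℝ} (hp : p ≠ 0) :
    HasDerivAt (upperGamma q) (-(p ^ (q - 1) * Real.exp (-p))) p := by
  rw [funext (upperGamma_eq_sub_integral hq)]
  refine (intervalIntegral.integral_hasDerivAt_right (intervalIntegrable_rpow_mul_exp_neg hq 0 p)
    ?_ ?_).const_sub _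
  · exact (by fun_prop : Measurable fun t : ℝ => t ^ (q - 1) * Real.exp (-t)).stronglyMeasurable
      |>.stronglyMeasurableAtFilter
  · exact (Real.continuousAt_rpow_const _ _ (Or.inl hp)).mul (by fun_prop)

end UpperGamma

section Characteristics

variable {a b c v : ℝ}

theorem continuous_Dfun (hv : 0 < v) : Continuous fun p : ℝ × ℝ => Dfun a b v p.1 p.2 := by
  have := continuous_upperGamma (q := 2 * v) (by linarith)
  unfold Dfun
  fun_prop

theorem hasDerivAt_Dfun (C μ : ℝ) : HasDerivAt (fun C => Dfun a b v C μ) (Real.exp (b * μ)) C := by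
  unfold Dfun
  simpa using ((hasDerivAt_id C).const_mul (Real.exp (b * μ))).const_add
    (a * b ^ (-(2 * v)) * upperGamma (2 * v) (b * μ) * Real.exp (b * μ))

theorem hasDerivAt_div_Dfun {C μ : ℝ} (h : Dfun a b v C μ ≠ 0) :
    HasDerivAt (fun C => c / Dfun a b v C μ)
      (-(c * Real.exp (b * μ)) / Dfun a b v C μ ^ 2) C := by
  simp_rw [div_eq_mul_inv c]
  exact (((hasDerivAt_Dfun C μ).inv h).const_mul c).congr_deriv (by ring)

variable {t s : ℝ}

theorem Cfun_eq_inv_sub (hs : s ≠ 0) :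
    Cfun a b v t s =
      (s * Real.exp (b * t))⁻¹ - a * b ^ (-(2 * v)) * upperGamma (2 * v) (b * t) := by
  unfold Cfun
  field_simp

theorem Dfun_Cfun_self (hs : s ≠ 0) : Dfun a b v (Cfun a b v t s) t = s⁻¹ := by
  unfold Dfun
  rw [Cfun_eq_inv_sub hs]
  field_simp
  ring

theorem Afun_eq_inv_Dfun (hs : s ≠ 0) : Afun a b v t s = (Dfun a b v (Cfun a b v t s) 0)⁻¹ := by
  unfold Afun Dfun
  rw [Cfun_eq_inv_sub hs, mul_zero, Real.exp_zero]
  field_simp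
  ring

theorem hasDerivAt_Cfun_left (hb : 0 < b) (hv : 0 < v) (ht : 0 < t) (hs : s ≠ 0) :
    HasDerivAt (fun t' => Cfun a b v t' s)
      (a * t ^ (2 * v - 1) * Real.exp (-(b * t)) - b / (s * Real.exp (b * t))) t := by
  rw [funext fun t' => Cfun_eq_inv_sub (a := a) (b := b) (v := v) (t := t') hs]
  have hbt : HasDerivAt (fun t' => b * t') b t := by simpa using (hasDerivAt_id t).const_mul b
  have hΓ :=
    (hasDerivAt_upperGamma (q := 2 * v) (by linarith) (by positivity : b * t ≠ 0)).comp t hbt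
  refine ((hbt.exp.const_mul s).inv (by positivity)).sub (hΓ.const_mul _) |>.congr_deriv ?_
  have hrpow : b ^ (-(2 * v)) * (b * t) ^ (2 * v - 1) * b = t ^ (2 * v - 1) := by
    have hb1 : b ^ (-(2 * v)) * b ^ (2 * v - 1) * b = 1 := by
      rw [← Real.rpow_add hb, ← Real.rpow_add_one hb.ne']
      ring_nf
      exact Real.rpow_zero b
    rw [Real.mul_rpow hb.le ht.le]
    linear_combination t ^ (2 * v - 1) * hb1
  rw [Real.exp_neg, ← hrpow]
  field_simp
  ring

theorem hasDerivAt_Cfun_right (hs : s ≠ 0) :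
    HasDerivAt (fun s' => Cfun a b v t s') (-(s ^ 2 * Real.exp (b * t))⁻¹) s := by
  have hlin : HasDerivAt (fun s' => s' * Real.exp (b * t)) (Real.exp (b * t)) s := by
    simpa using (hasDerivAt_id s).mul_const (Real.exp (b * t))
  refine (((hlin.inv (by positivity)).sub_const
    (a * b ^ (-(2 * v)) * upperGamma (2 * v) (b * t))).congr_of_eventuallyEq ?_).congr_deriv ?_
  · filter_upwards [eventually_ne_nhds hs] with s' hs'
    exact Cfun_eq_inv_sub hs'
  · field_simp

end Characteristics

/-- `ω` with the characteristic constant as a free variable: `ω(t, s) = Φ(C(t, s), t)`. -/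
noncomputable def omegaChar (a b c v : ℝ) (piT f : ℝ → ℝ) (p : ℝ × ℝ) : ℝ :=
  Real.exp (-Gfun a b c v p.1 p.2) * piT (Dfun a b v p.1 0)⁻¹ +
    Real.exp (-Gfun a b c v p.1 p.2) * ∫ τ in (0 : ℝ)..p.2, f τ * Real.exp (Gfun a b c v p.1 τ)

theorem omegaSol_eq_omegaChar {a b c v t s : ℝ} {piT f : ℝ → ℝ} (hs : s ≠ 0) :
    omegaSol a b c v piT f t s = omegaChar a b c v piT f (Cfun a b v t s, t) := by
  rw [omegaSol, omegaChar, Afun_eq_inv_Dfun hs]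

section Box

variable {a b c v C₁ C₂ T : ℝ}

theorem continuousOn_div_Dfun (hv : 0 < v)
    (hD : ∀ p ∈ Icc C₁ C₂ ×ˢ Icc 0 T, 0 < Dfun a b v p.1 p.2) :
    ContinuousOn (uncurry fun C μ => c / Dfun a b v C μ) (Icc C₁ C₂ ×ˢ Icc 0 T) :=
  continuousOn_const.div (continuous_Dfun hv).continuousOn fun p hp => (hD p hp).ne'

theorem continuousOn_div_Dfun_sq (hv : 0 < v)
    (hD : ∀ p ∈ Icc C₁ C₂ ×ˢ Icc 0 T, 0 < Dfun a b v p.1 p.2) :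
    ContinuousOn (uncurry fun C μ => -(c * Real.exp (b * μ)) / Dfun a b v C μ ^ 2)
      (Icc C₁ C₂ ×ˢ Icc 0 T) :=
  (by fun_prop : Continuous fun p : ℝ × ℝ => -(c * Real.exp (b * p.2))).continuousOn.div
    ((continuous_Dfun hv).pow 2).continuousOn fun p hp => pow_ne_zero 2 (hD p hp).ne'

theorem exists_hasFDerivAt_omegaChar (hv : 0 < v) {piT f : ℝ → ℝ} {C t : ℝ}
    (hC : C ∈ Ioo C₁ C₂) (ht : t ∈ Ioo 0 T)
    (hD : ∀ p ∈ Icc C₁ C₂ ×ˢ Icc 0 T, 0 < Dfun a b v p.1 p.2)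
    (hπ : DifferentiableAt ℝ piT (Dfun a b v C 0)⁻¹) (hf : ContinuousOn f (Icc 0 T)) :
    ∃ L : ℝ × ℝ →L[ℝ] ℝ, HasFDerivAt (omegaChar a b c v piT f) L (C, t) ∧
      L (0, 1) = -(c / Dfun a b v C t) * omegaChar a b c v piT f (C, t) + f t := by
  have h0 : (0 : ℝ) ∈ Icc 0 T := left_mem_Icc.mpr (ht.1.trans ht.2).le
  have hg := continuousOn_div_Dfun (c := c) hv hD
  have hg' := continuousOn_div_Dfun_sq (c := c) hv hD
  have hgd : ∀ C ∈ Ioo C₁ C₂, ∀ μ ∈ Icc 0 T, HasDerivAt (fun C => c / Dfun a b v C μ)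
      (-(c * Real.exp (b * μ)) / Dfun a b v C μ ^ 2) C := fun C hC μ hμ =>
    hasDerivAt_div_Dfun (hD (C, μ) ⟨Ioo_subset_Icc_self hC, hμ⟩).ne'
  have hG := continuousOn_parametric_primitive h0 hg
  have hG' := continuousOn_parametric_primitive h0 hg'
  have hψ : ContinuousOn (uncurry fun C τ => f τ * Real.exp (Gfun a b c v C τ))
      (Icc C₁ C₂ ×ˢ Icc 0 T) :=
    (hf.comp continuous_snd.continuousOn fun p hp => hp.2).mul hG.rexp
  have hψ' : ContinuousOn (uncurry fun C τ => f τ * Real.exp (Gfun a b c v C τ) *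
      ∫ μ in (0 : ℝ)..τ, -(c * Real.exp (b * μ)) / Dfun a b v C μ ^ 2) (Icc C₁ C₂ ×ˢ Icc 0 T) :=
    hψ.mul hG'
  have hψd : ∀ C ∈ Ioo C₁ C₂, ∀ τ ∈ Icc 0 T,
      HasDerivAt (fun C => f τ * Real.exp (Gfun a b c v C τ)) (f τ * Real.exp (Gfun a b c v C τ) *
        ∫ μ in (0 : ℝ)..τ, -(c * Real.exp (b * μ)) / Dfun a b v C μ ^ 2) C := fun C hC τ hτ =>
    ((hasDerivAt_intervalIntegral_of_continuousOn hC h0 hτ hg hg' hgd).exp.const_mul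
      (f τ)).congr_deriv (by unfold Gfun; ring)
  have hGd := (hasFDerivAt_parametric_primitive hC ht h0 hg hg' hgd).neg.exp
  have hΨd := hasFDerivAt_parametric_primitive hC ht h0 hψ hψ' hψd
  have hπd := hπ.hasDerivAt.comp_hasFDerivAt (C, t)
    (((hasDerivAt_Dfun C 0).inv (hD (C, 0) ⟨Ioo_subset_Icc_self hC, h0⟩).ne').comp_hasFDerivAt
      (f := Prod.fst) (C, t) (hasFDerivAt_fst (𝕜 := ℝ) (E := ℝ) (F := ℝ) (p := (C, t))))
  refine ⟨_, (hGd.mul hπd).add (hGd.mul hΨd), ?_⟩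
  simp only [Pi.neg_apply, mul_zero, exp_zero, comp_apply, Pi.inv_apply, neg_add_rev, smul_add,
    smul_neg, add_apply, smul_apply, ContinuousLinearMap.coe_fst', smul_eq_mul, neg_apply,
    ContinuousLinearMap.coe_snd', mul_one, neg_zero, add_zero, zero_add, neg_mul]
  unfold omegaChar Gfun
  rw [Real.exp_neg]
  field_simp
  ring

end Box

theorem stmt5_general (a b c v : ℝ) (hb : 0 < b) (hv : 0 < v)
    (piT f : ℝ → ℝ) (hπ : ContDiffOn ℝ 1 piT (Set.Ioi 0)) (hf : ContinuousOn f (Set.Ici 0))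
    (t s : ℝ) (ht : 0 < t) (hs : 0 < s)
    (hpos : ∀ μ ∈ Set.Icc (0 : ℝ) t, 0 < Dfun a b v (Cfun a b v t s) μ) :
    ∃ ωt ωs : ℝ,
      HasDerivAt (fun t' : ℝ => omegaSol a b c v piT f t' s) ωt t ∧
      HasDerivAt (fun s' : ℝ => omegaSol a b c v piT f t s') ωs s ∧
      ωt + s * (a * t ^ (2 * v - 1) * s - b) * ωs
        = -c * s * omegaSol a b c v piT f t s + f t := by
  set C₀ := Cfun a b v t s
  obtain ⟨r, T, hr, hT, hD⟩ := exists_Icc_prod_Icc_subset_of_isOpen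
    (isOpen_lt continuous_const (continuous_Dfun (a := a) (b := b) hv)) ht.le
    (fun p ⟨hp₁, hp₂⟩ => (show p.1 = C₀ from hp₁) ▸ hpos p.2 hp₂)
  have hπA : DifferentiableAt ℝ piT (Dfun a b v C₀ 0)⁻¹ :=
    (hπ.differentiableOn one_ne_zero).differentiableAt
      (Ioi_mem_nhds (inv_pos.mpr (hpos 0 ⟨le_rfl, ht.le⟩)))
  obtain ⟨L, hL, hL01⟩ := exists_hasFDerivAt_omegaChar (c := c) hv
    (C := C₀) ⟨by linarith, by linarith⟩ ⟨ht, hT⟩ hD hπA (hf.mono Icc_subset_Ici_self)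
  have hωt := hL.comp_hasDerivAt (f := fun t' => (Cfun a b v t' s, t')) t
    ((hasDerivAt_Cfun_left hb hv ht hs.ne').prodMk (hasDerivAt_id' t))
  have hωs := hL.comp_hasDerivAt (f := fun s' => (Cfun a b v t s', t)) s
    ((hasDerivAt_Cfun_right hs.ne').prodMk (hasDerivAt_const s t))
  refine ⟨_, _,
    hωt.congr_of_eventuallyEq (Eventually.of_forall fun t' => omegaSol_eq_omegaChar hs.ne'),
    hωs.congr_of_eventuallyEq
      ((eventually_ne_nhds hs.ne').mono fun s' hs' => omegaSol_eq_omegaChar hs'), ?_⟩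
  rw [← smul_eq_mul (s * (a * t ^ (2 * v - 1) * s - b)), ← map_smul, ← map_add,
    omegaSol_eq_omegaChar hs.ne']
  convert hL01 using 2
  · -- `C` is constant along the characteristics `ds/dt = s (a t^(2v-1) s - b)`
    ext
    · simp only [Prod.fst_add, Prod.smul_fst, smul_eq_mul]
      rw [Real.exp_neg]
      field_simp
      ring
    · simp
  · rw [Dfun_Cfun_self hs.ne', div_inv_eq_mul, neg_mul]

/-- Lemma 1 of the paper: at every admissible point `(t, s)` the function `ω` has partial
derivatives `ω_t`, `ω_s` and satisfies
`ω_t + s·(a·t^(2v−1)·s − b)·ω_s = −c·s·ω + f(t)`. -/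
theorem stmt5 (a b c v : ℝ) (ha : 0 < a) (hb : 0 < b) (hv : 0 < v)
    (piT f : ℝ → ℝ) (hπ : ContDiffOn ℝ 1 piT (Set.Ioi 0)) (hf : ContinuousOn f (Set.Ici 0))
    (t s : ℝ) (ht : 0 < t) (hs : 0 < s)
    (hpos : ∀ μ ∈ Set.Icc (0 : ℝ) t, 0 < Dfun a b v (Cfun a b v t s) μ)
    (hden : 0 < 1 - s * Real.exp (b * t) * a * b ^ (-(2 * v)) *
      (upperGamma (2 * v) (b * t) - upperGamma (2 * v) 0)) :
    ∃ ωt ωs : ℝ,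
      HasDerivAt (fun t' : ℝ => omegaSol a b c v piT f t' s) ωt t ∧
      HasDerivAt (fun s' : ℝ => omegaSol a b c v piT f t s') ωs s ∧
      ωt + s * (a * t ^ (2 * v - 1) * s - b) * ωs
        = -c * s * omegaSol a b c v piT f t s + f t :=
  stmt5_general a b c v hb hv piT f hπ hf t s ht hs hpos
end

section
/- Let a, b, c, v be real constants with a > 0, b > 0, v > 0, and let π : (0, ∞) → ℝ be a function such that L := lim_{σ → 0⁺} π(σ) exists. With C(t, s) := (1 − s·a·b^(−2v)·Γ(2v, bt)·e^(bt)) / (s·e^(bt)), A(t, s) := s·e^(bt) / (1 − s·e^(bt)·a·b^(−2v)·(Γ(2v, bt) − Γ(2v))), G(t; C) := ∫_0^t c / (a·b^(−2v)·Γ(2v, bμ)·e^(bμ) + e^(bμ)·C) dμ, and ω(t, s) := e^(−G(t; C(t,s)))·π(A(t, s)), one has, for every fixed t > 0, lim_{s → 0⁺} ω(t, s) = L. -/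
open Real MeasureTheory intervalIntegral

/-! As `s → 0⁺` the constant `C(t, s)` tends to `+∞`; since the denominator of the integrand of
`G(t; C)` is at least `C` on `[0, t]`, `|G(t; C)| ≤ |c| t / C → 0`, so `e^(−G) → 1`. Meanwhile
`A(t, s) → 0⁺`, so `π(A(t, s)) → L`. -/

open Filter Topology

lemma upperGamma_nonneg (q : ℝ) {p : ℝ} (hp : 0 ≤ p) : 0 ≤ upperGamma q p :=
  setIntegral_nonneg measurableSet_Ioi fun x hx => by
    have : 0 ≤ x := hp.trans hx.le
    positivity

lemma le_Dfun {a b C μ : ℝ} (v : ℝ) (ha : 0 < a) (hb : 0 < b) (hμ : 0 ≤ μ) (hC : 0 < C) :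
    C ≤ Dfun a b v C μ := by
  have hΓ : 0 ≤ a * b ^ (-(2 * v)) * upperGamma (2 * v) (b * μ) * exp (b * μ) := by
    have := upperGamma_nonneg (2 * v) (mul_nonneg hb.le hμ)
    positivity
  have hexp : C ≤ exp (b * μ) * C :=
    le_mul_of_one_le_left hC.le (one_le_exp (mul_nonneg hb.le hμ))
  unfold Dfun
  linarith

lemma abs_Gfun_le {a b C t : ℝ} (c v : ℝ) (ha : 0 < a) (hb : 0 < b) (ht : 0 ≤ t) (hC : 0 < C) :
    |Gfun a b c v C t| ≤ |c| / C * t := by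
  have hbound : ∀ μ ∈ Set.uIoc 0 t, ‖c / Dfun a b v C μ‖ ≤ |c| / C := by
    intro μ hμ
    rw [Set.uIoc_of_le ht] at hμ
    have hD := le_Dfun v ha hb hμ.1.le hC
    rw [norm_div, norm_eq_abs, norm_eq_abs, abs_of_pos (hC.trans_le hD)]
    gcongr
  simpa [Gfun, abs_of_nonneg ht] using norm_integral_le_of_norm_le_const hbound

lemma tendsto_Gfun_atTop {a b t : ℝ} (c v : ℝ) (ha : 0 < a) (hb : 0 < b) (ht : 0 ≤ t) :
    Tendsto (fun C => Gfun a b c v C t) atTop (𝓝 0) := by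
  have hbound : Tendsto (fun C => |c| / C * t) atTop (𝓝 0) := by
    simpa [div_eq_mul_inv] using (tendsto_inv_atTop_zero.const_mul |c|).mul_const t
  refine squeeze_zero_norm' ?_ hbound
  filter_upwards [eventually_gt_atTop 0] with C hC
  exact abs_Gfun_le c v ha hb ht hC

lemma tendsto_one_sub_mul_nhdsGT_zero (M : ℝ) :
    Tendsto (fun s : ℝ => 1 - s * M) (𝓝[>] 0) (𝓝 1) := by
  have := (by fun_prop : Continuous fun s : ℝ => 1 - s * M).tendsto 0
  simpa using this.mono_left nhdsWithin_le_nhds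

lemma tendsto_mul_const_nhdsGT_zero {K : ℝ} (hK : 0 < K) :
    Tendsto (fun s : ℝ => s * K) (𝓝[>] 0) (𝓝[>] 0) := by
  refine tendsto_nhdsWithin_of_tendsto_nhds_of_eventually_within _ ?_ ?_
  · have := (by fun_prop : Continuous fun s : ℝ => s * K).tendsto 0
    simpa using this.mono_left nhdsWithin_le_nhds
  · filter_upwards [self_mem_nhdsWithin] with s hs
    exact mul_pos hs hK

lemma tendsto_one_sub_mul_div_mul_atTop {K : ℝ} (hK : 0 < K) (M : ℝ) :
    Tendsto (fun s : ℝ => (1 - s * M) / (s * K)) (𝓝[>] 0) atTop := by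
  simpa [div_eq_mul_inv] using (tendsto_one_sub_mul_nhdsGT_zero M).pos_mul_atTop one_pos
    (tendsto_mul_const_nhdsGT_zero hK).inv_tendsto_nhdsGT_zero

lemma tendsto_mul_div_one_sub_mul_nhdsGT_zero {K : ℝ} (hK : 0 < K) (M : ℝ) :
    Tendsto (fun s : ℝ => s * K / (1 - s * M)) (𝓝[>] 0) (𝓝[>] 0) := by
  have hnum := tendsto_mul_const_nhdsGT_zero hK
  have hden := tendsto_one_sub_mul_nhdsGT_zero M
  refine tendsto_nhdsWithin_of_tendsto_nhds_of_eventually_within _ ?_ ?_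
  · simpa [Pi.div_def] using (hnum.mono_right nhdsWithin_le_nhds).div hden one_ne_zero
  · filter_upwards [hnum.eventually self_mem_nhdsWithin,
      hden.eventually (eventually_gt_nhds one_pos)] with s hs hs'
    exact div_pos hs hs'

lemma tendsto_Cfun_atTop (a b v t : ℝ) : Tendsto (Cfun a b v t) (𝓝[>] 0) atTop := by
  convert tendsto_one_sub_mul_div_mul_atTop (exp_pos (b * t))
    (a * b ^ (-(2 * v)) * upperGamma (2 * v) (b * t) * exp (b * t)) using 2 with s
  unfold Cfun
  ring

lemma tendsto_Afun_nhdsGT_zero (a b v t : ℝ) : Tendsto (Afun a b v t) (𝓝[>] 0) (𝓝[>] 0) := by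
  convert tendsto_mul_div_one_sub_mul_nhdsGT_zero (exp_pos (b * t))
    (exp (b * t) * a * b ^ (-(2 * v)) * (upperGamma (2 * v) (b * t) - upperGamma (2 * v) 0))
    using 2 with s
  unfold Afun
  ring

theorem stmt14_general (a b c v : ℝ) (ha : 0 < a) (hb : 0 < b)
    (piT : ℝ → ℝ) (L : ℝ)
    (hL : Filter.Tendsto piT (nhdsWithin 0 (Set.Ioi 0)) (nhds L))
    (t : ℝ) (ht : 0 < t) :
    Filter.Tendsto
      (fun s : ℝ => Real.exp (-Gfun a b c v (Cfun a b v t s) t) * piT (Afun a b v t s))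
      (nhdsWithin 0 (Set.Ioi 0)) (nhds L) := by
  have hG := (tendsto_Gfun_atTop c v ha hb ht.le).comp (tendsto_Cfun_atTop a b v t)
  simpa using hG.neg.rexp.mul (hL.comp (tendsto_Afun_nhdsGT_zero a b v t))

/-- Norm preservation: with `ω(t, s) = e^(−G(t; C(t,s)))·π(A(t, s))`, if `π(σ) → L` as
`σ → 0⁺`, then for every fixed `t > 0`, `ω(t, s) → L` as `s → 0⁺`. -/
theorem stmt14 (a b c v : ℝ) (ha : 0 < a) (hb : 0 < b) (hv : 0 < v)
    (piT : ℝ → ℝ) (L : ℝ)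
    (hL : Filter.Tendsto piT (nhdsWithin 0 (Set.Ioi 0)) (nhds L))
    (t : ℝ) (ht : 0 < t) :
    Filter.Tendsto
      (fun s : ℝ => Real.exp (-Gfun a b c v (Cfun a b v t s) t) * piT (Afun a b v t s))
      (nhdsWithin 0 (Set.Ioi 0)) (nhds L) :=
  stmt14_general a b c v ha hb piT L hL t ht
end
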